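/- For d ≥ 3, the complete intersection V(q₁, q₂) ⊂ ℂ^{2d}, where q₁ = Σ_{i=1}^d xᵢᵈ + ψ·∏_{j=1}^d x_{d+j} and q₂ = Σ_{i=1}^d x_{d+i}ᵈ + ψ·∏_{j=1}^d x_j with ψ ≠ 0, has singular points outside the origin: for instance any point of the form (0,…,0, x_{d+3},…,x_{2d}) with x₁ = … = x_{d+2} = 0 and Σ_{k=d+3}^{2d} x_kᵈ = 0, not all x_k zero, is a common zero of q₁, q₂ at which the Jacobian matrix of (q₁,q₂) has rank < 2. -/
import Mathlib


open MvPolynomial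

private lemma aux_pderiv_zero {n : ℕ} (x : Fin n → ℂ) (i a b : Fin n)
    (xa : x a = 0) (xb : x b = 0) (q : MvPolynomial (Fin n) ℂ) :
    eval x (pderiv i (X a * (X b * q))) = 0 := by
  rw [pderiv_mul, pderiv_mul]
  simp [xa, xb]

/-- For `d ≥ 3` and `ψ ≠ 0`, the affine complete intersection `V(q₁,q₂) ⊂ ℂ^{2d}`
with `q₁ = Σᵢ xᵢᵈ + ψ·∏ⱼ x_{d+j}` and `q₂ = Σᵢ x_{d+i}ᵈ + ψ·∏ⱼ xⱼ` is singular
away from the origin: any nonzero point with `x₁ = … = x_{d+2} = 0` and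
`Σ x_kᵈ = 0` is a common zero at which the Jacobian of `(q₁,q₂)` has rank `< 2`. -/
theorem stmt14 (d : ℕ) (hd : 3 ≤ d) (ψ : ℂ) (hψ : ψ ≠ 0)
    (q₁ q₂ : MvPolynomial (Fin (2 * d)) ℂ)
    (hq₁ : q₁ =
      (∑ i : Fin d, (X (⟨i.1, by have := i.2; omega⟩ : Fin (2 * d)) : MvPolynomial (Fin (2 * d)) ℂ) ^ d)
        + C ψ * ∏ j : Fin d, X (⟨d + j.1, by have := j.2; omega⟩ : Fin (2 * d)))
    (hq₂ : q₂ =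
      (∑ i : Fin d, (X (⟨d + i.1, by have := i.2; omega⟩ : Fin (2 * d)) : MvPolynomial (Fin (2 * d)) ℂ) ^ d)
        + C ψ * ∏ j : Fin d, X (⟨j.1, by have := j.2; omega⟩ : Fin (2 * d)))
    (x : Fin (2 * d) → ℂ) (hx : x ≠ 0)
    (hzero : ∀ k : Fin (2 * d), (k : ℕ) < d + 2 → x k = 0)
    (hsum : ∑ k : Fin (2 * d), x k ^ d = 0) :
    eval x q₁ = 0 ∧ eval x q₂ = 0 ∧
      (Matrix.of fun (a : Fin 2) (i : Fin (2 * d)) =>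
        eval x (pderiv i (![q₁, q₂] a))).rank < 2 := by
  have hdpos : 0 < d := by omega
  -- helper: first-block coordinates vanish
  have hx1 : ∀ i : Fin d, x ⟨i.1, by have := i.2; omega⟩ = 0 := fun i =>
    hzero _ (by simp; omega)
  -- the two distinguished zero coords in the second block
  have hxd0 : x ⟨d + (⟨0, hdpos⟩ : Fin d).1, by omega⟩ = 0 := hzero _ (by simp)
  have hxd1 : x ⟨d + (⟨1, by omega⟩ : Fin d).1, by omega⟩ = 0 := hzero _ (by simp)
  have hA : x ⟨d, by omega⟩ = 0 := hzero _ (by simp)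
  -- rewrite the second-block product extracting indices 0 and 1 of Fin d
  have hsplit : ∀ (g : Fin d → MvPolynomial (Fin (2 * d)) ℂ),
      ∏ j : Fin d, g j =
        g ⟨0, hdpos⟩ * (g ⟨1, by omega⟩ *
          ∏ j ∈ (Finset.univ.erase ⟨0, hdpos⟩).erase ⟨1, by omega⟩, g j) := by
    intro g
    have h1 : (⟨1, by omega⟩ : Fin d) ∈ Finset.univ.erase (⟨0, hdpos⟩ : Fin d) :=
      Finset.mem_erase.2 ⟨by simp [Fin.ext_iff], Finset.mem_univ _⟩
    rw [← Finset.mul_prod_erase Finset.univ g (Finset.mem_univ ⟨0, hdpos⟩),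
      ← Finset.mul_prod_erase _ g h1]
  have heval1 : eval x q₁ = 0 := by
    rw [hq₁]
    rw [hsplit (fun j => X ⟨d + j.1, by have := j.2; omega⟩)]
    simp [hx1, hxd0, hA, hdpos.ne']
  have heval2 : eval x q₂ = 0 := by
    have hcast : 2 * d = d + d := by ring
    have hsum2 : ∑ i : Fin d, x ⟨d + i.1, by have := i.2; omega⟩ ^ d = 0 := by
      have := hsum
      rw [← Fin.sum_congr' (fun k : Fin (2 * d) => x k ^ d) hcast.symm] at this
      rw [Fin.sum_univ_add] at this
      have h1 : ∀ i : Fin d,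
          x (Fin.cast hcast.symm (Fin.castAdd d i)) ^ d = 0 := by
        intro i
        rw [hzero _ (by simp [Fin.ext_iff]; omega)]
        exact zero_pow hdpos.ne'
      rw [Finset.sum_congr rfl (fun i _ => h1 i), Finset.sum_const, smul_zero,
        zero_add] at this
      rw [← this]
      apply Finset.sum_congr rfl
      intro i _
      congr 1
    rw [hq₂]
    rw [hsplit (fun j => X ⟨j.1, by have := j.2; omega⟩)]
    simp only [eval_add, eval_sum, eval_pow, eval_X, eval_mul, eval_C]
    rw [hsum2]
    have : x ⟨(⟨0, hdpos⟩ : Fin d).1, by omega⟩ = 0 := hx1 _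
    simp [this]
  refine ⟨heval1, heval2, ?_⟩
  -- the first row of the Jacobian vanishes
  set M : Matrix (Fin 2) (Fin (2 * d)) ℂ :=
    Matrix.of fun (a : Fin 2) (i : Fin (2 * d)) =>
      eval x (pderiv i (![q₁, q₂] a)) with hM
  have hrow0 : (fun i => M 0 i) = (0 : Fin (2 * d) → ℂ) := by
    funext i
    show eval x (pderiv i (![q₁, q₂] 0)) = 0
    simp only [Matrix.cons_val_zero]
    rw [hq₁, map_add, pderiv_C_mul, map_sum]
    rw [hsplit (fun j => X ⟨d + j.1, by have := j.2; omega⟩)]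
    rw [map_add, eval_sum, eval_mul, eval_C,
      aux_pderiv_zero x i _ _ hxd0 hxd1, mul_zero, add_zero]
    apply Finset.sum_eq_zero
    intro j _
    rw [pderiv_pow, eval_mul, eval_mul, eval_pow, eval_X, hx1 j,
      zero_pow (by omega : d - 1 ≠ 0)]
    ring
  -- hence the rank is at most 1
  have hle : M.rank ≤ 1 := by
    rw [Matrix.rank_eq_finrank_span_row]
    have hss : Submodule.span ℂ (Set.range M) ≤ Submodule.span ℂ {M 1} := by
      rw [Submodule.span_le]
      rintro _ ⟨a, rfl⟩
      fin_cases a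
      · show (fun i => M 0 i) ∈ _
        rw [hrow0]
        exact Submodule.zero_mem _
      · exact Submodule.subset_span rfl
    refine le_trans (Submodule.finrank_mono hss) ?_
    simpa using finrank_span_le_card ({M 1} : Set (Fin (2 * d) → ℂ))
  omega
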